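/- Let m ≥ 2 be a natural number, A0, A1 nonempty finite index types, N a quantum channel from Matrix A0 A0 ℂ to Matrix A1 A1 ℂ, and E₀ a classical channel such that ((m : ℝ) • J(E₀) − J(N)).PosSemidef. Then there exists a state-to-channel supermap Θ : Matrix (Fin m) (Fin m) ℂ →ₗ (Matrix A0 A0 ℂ →ₗ Matrix A1 A1 ℂ) such that: (i) the linear map ρ ↦ J(Θ[ρ]) is completely positive; (ii) Θ[ρ] is trace-preserving for every density matrix ρ; (iii) Θ[ρ] is a classical channel for every diagonal density matrix ρ; and (iv) Θ[φ⁺_m] = N, where φ⁺_m i j = 1/m is the maximally coherent state. (Hence the exact single-shot coherence cost under MISC satisfies C⁰_MISC(N) ≤ LR_C(N) + 1.) -/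

import Mathlib

open Matrix Kronecker ComplexOrder

noncomputable section

/-- Choi matrix of a linear map between matrix algebras. -/
def choi {ι κ : Type*} [Fintype ι] [DecidableEq ι]
    (Φ : Matrix ι ι ℂ →ₗ[ℂ] Matrix κ κ ℂ) : Matrix (ι × κ) (ι × κ) ℂ :=
  Matrix.of fun p q => Φ (Matrix.single p.1 q.1 1) p.2 q.2

/-- Completely positive: the Choi matrix is positive semidefinite. -/
def IsCP {ι κ : Type*} [Fintype ι] [DecidableEq ι] [Fintype κ]
    (Φ : Matrix ι ι ℂ →ₗ[ℂ] Matrix κ κ ℂ) : Prop := (choi Φ).PosSemidef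

/-- Trace preserving. -/
def IsTP {ι κ : Type*} [Fintype ι] [Fintype κ]
    (Φ : Matrix ι ι ℂ →ₗ[ℂ] Matrix κ κ ℂ) : Prop := ∀ X, (Φ X).trace = X.trace

/-- Quantum channel: CP and TP. -/
def IsChannel {ι κ : Type*} [Fintype ι] [DecidableEq ι] [Fintype κ]
    (Φ : Matrix ι ι ℂ →ₗ[ℂ] Matrix κ κ ℂ) : Prop := IsCP Φ ∧ IsTP Φ

/-- Max-relative robustness `r(X‖Y)` between two maps. -/
def maxRelRobust {ι κ : Type*} [Fintype ι] [DecidableEq ι] [Fintype κ]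
    (X Y : Matrix ι ι ℂ →ₗ[ℂ] Matrix κ κ ℂ) : ℝ :=
  sInf {t : ℝ | 0 ≤ t ∧ (t • choi Y - choi X).PosSemidef}

/-- Dephasing (decoherence) map as a linear map. -/
def deph {ι : Type*} [DecidableEq ι] : Matrix ι ι ℂ →ₗ[ℂ] Matrix ι ι ℂ where
  toFun M := Matrix.of fun i j => if i = j then M i j else 0
  map_add' X Y := by
    ext i j
    by_cases h : i = j <;> simp [h]
  map_smul' c X := by
    ext i j
    by_cases h : i = j <;> simp [h]

/-- Classical map: invariant under dephasing of input and output. -/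
def IsClassical {ι κ : Type*} [DecidableEq ι] [DecidableEq κ]
    (Φ : Matrix ι ι ℂ →ₗ[ℂ] Matrix κ κ ℂ) : Prop := deph ∘ₗ Φ ∘ₗ deph = Φ

/-- Coherence robustness `r_C(N)`: robustness relative to classical channels. -/
def coherenceRobust {ι κ : Type*} [Fintype ι] [DecidableEq ι] [Fintype κ] [DecidableEq κ]
    (N : Matrix ι ι ℂ →ₗ[ℂ] Matrix κ κ ℂ) : ℝ :=
  sInf {t : ℝ | 0 ≤ t ∧ ∃ E₀ : Matrix ι ι ℂ →ₗ[ℂ] Matrix κ κ ℂ,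
    IsChannel E₀ ∧ IsClassical E₀ ∧ (t • choi E₀ - choi N).PosSemidef}

/-- The linear map `ρ ↦ J(Θ[ρ])` associated with a state-to-channel supermap. -/
def choiMapOf {ι A0 A1 : Type*} [Fintype ι] [DecidableEq ι] [Fintype A0] [DecidableEq A0]
    (Θ : Matrix ι ι ℂ →ₗ[ℂ] (Matrix A0 A0 ℂ →ₗ[ℂ] Matrix A1 A1 ℂ)) :
    Matrix ι ι ℂ →ₗ[ℂ] Matrix (A0 × A1) (A0 × A1) ℂ where
  toFun ρ := choi (Θ ρ)
  map_add' X Y := by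
    ext p q
    simp [choi, map_add]
  map_smul' c X := by
    ext p q
    simp [choi, _root_.map_smul]

/-- The maximally coherent state `φ⁺_m i j = 1/m`. -/
def maxCoh (m : ℕ) : Matrix (Fin m) (Fin m) ℂ :=
  Matrix.of fun _ _ => (1 : ℂ) / (m : ℂ)


/-! ### Auxiliary lemmas -/

lemma trace_mul_stdBasisMatrix' {n : Type*} [Fintype n] [DecidableEq n]
    (M : Matrix n n ℂ) (i j : n) :
    (M * Matrix.single i j 1).trace = M j i := by
  rw [Matrix.trace, Finset.sum_eq_single j]
  · simp [Matrix.diag, Matrix.mul_single_apply_same]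
  · intro b _ hb
    simp [Matrix.diag, Matrix.mul_apply, Matrix.single, (Ne.symm hb)]
  · simp

lemma kron_conjT {n p : Type*} (A : Matrix n n ℂ) (B : Matrix p p ℂ) :
    (A ⊗ₖ B)ᴴ = Aᴴ ⊗ₖ Bᴴ := by
  ext ⟨i,k⟩ ⟨j,l⟩
  simp [Matrix.conjTranspose_apply]

lemma psd_kron {n p : Type*} [Fintype n] [Fintype p] {A : Matrix n n ℂ} {B : Matrix p p ℂ}
    (hA : A.PosSemidef) (hB : B.PosSemidef) : (A ⊗ₖ B).PosSemidef := by
  exact hA.kronecker hB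

lemma psd_of_eq_ct_mul {n : Type*} [Fintype n] {A B : Matrix n n ℂ} (h : A = Bᴴ * B) :
    A.PosSemidef := h ▸ Matrix.posSemidef_conjTranspose_mul_self B

lemma maxCoh_mul_self {m : ℕ} (hm : 2 ≤ m) : maxCoh m * maxCoh m = maxCoh m := by
  have hm0 : (m : ℂ) ≠ 0 := Nat.cast_ne_zero.mpr (by omega)
  ext i j
  simp [maxCoh, Matrix.mul_apply, Finset.sum_const]
  field_simp

lemma maxCoh_trace {m : ℕ} (hm : 2 ≤ m) : (maxCoh m).trace = 1 := by
  have hm0 : (m : ℂ) ≠ 0 := Nat.cast_ne_zero.mpr (by omega)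
  simp [maxCoh, Matrix.trace, Matrix.diag, Finset.sum_const]
  field_simp

lemma maxCoh_psd {m : ℕ} (hm : 2 ≤ m) : (maxCoh m).PosSemidef := by
  have hm0 : (m : ℂ) ≠ 0 := Nat.cast_ne_zero.mpr (by omega)
  refine psd_of_eq_ct_mul (B := maxCoh m) ?_
  ext i j
  simp [maxCoh, Matrix.mul_apply, Matrix.conjTranspose_apply, Finset.sum_const]
  field_simp

lemma one_sub_maxCoh_hermC {m : ℕ} : (1 - maxCoh m)ᴴ = 1 - maxCoh m := by
  ext i j
  simp [maxCoh, Matrix.conjTranspose_apply, Matrix.one_apply, eq_comm]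

lemma one_sub_maxCoh_idem {m : ℕ} (hm : 2 ≤ m) :
    (1 - maxCoh m) * (1 - maxCoh m) = 1 - maxCoh m := by
  have h := maxCoh_mul_self hm
  rw [sub_mul, mul_sub, mul_sub, h, mul_one, one_mul, mul_one]
  abel

lemma q_psd {m : ℕ} (hm : 2 ≤ m) :
    (((m : ℂ) - 1)⁻¹ • (1 - maxCoh m)).PosSemidef := by
  have hmr : (0:ℝ) ≤ ((m:ℝ) - 1)⁻¹ := by
    have : (2:ℝ) ≤ (m:ℝ) := by exact_mod_cast hm
    exact inv_nonneg.mpr (by linarith)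
  refine psd_of_eq_ct_mul
    (B := ((Real.sqrt (((m:ℝ) - 1)⁻¹) : ℝ) : ℂ) • (1 - maxCoh m)) ?_
  rw [Matrix.conjTranspose_smul, one_sub_maxCoh_hermC, smul_mul_assoc, mul_smul_comm,
    one_sub_maxCoh_idem hm, smul_smul]
  congr 1
  rw [Complex.star_def, Complex.conj_ofReal, ← Complex.ofReal_mul,
    Real.mul_self_sqrt hmr]
  push_cast
  norm_num

/-- The supermap `Θ`. -/
def thetaMap {m : ℕ} {A0 A1 : Type*}
    [Fintype A0] [DecidableEq A0] [Fintype A1]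
    (N E₀ : Matrix A0 A0 ℂ →ₗ[ℂ] Matrix A1 A1 ℂ) :
    Matrix (Fin m) (Fin m) ℂ →ₗ[ℂ] (Matrix A0 A0 ℂ →ₗ[ℂ] Matrix A1 A1 ℂ) where
  toFun ρ := (maxCoh m * ρ).trace • N
      + (((m:ℂ) - 1)⁻¹ * ((1 - maxCoh m) * ρ).trace) • ((m:ℂ) • E₀ - N)
  map_add' ρ σ := by
    simp only [mul_add, Matrix.trace_add, add_smul, mul_add]
    abel
  map_smul' c ρ := by
    simp only [Matrix.mul_smul, Matrix.trace_smul, smul_eq_mul, RingHom.id_apply,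
      smul_smul, smul_add, mul_left_comm]


/-- Upper bound on the exact single-shot MISC coherence cost: from a classical
channel `E₀` witnessing `m • J(E₀) ≥ J(N)` one can build a MISC state-to-channel
supermap on an `m`-dimensional coherence resource that simulates `N`. -/
theorem exists_MISC_simulation
    {m : ℕ} (hm : 2 ≤ m)
    {A0 A1 : Type*}
    [Fintype A0] [DecidableEq A0] [Nonempty A0]
    [Fintype A1] [DecidableEq A1] [Nonempty A1]
    (N : Matrix A0 A0 ℂ →ₗ[ℂ] Matrix A1 A1 ℂ) (hN : IsChannel N)
    (E₀ : Matrix A0 A0 ℂ →ₗ[ℂ] Matrix A1 A1 ℂ)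
    (hE₀ : IsChannel E₀) (hE₀c : IsClassical E₀)
    (hrob : ((m : ℝ) • choi E₀ - choi N).PosSemidef) :
    ∃ Θ : Matrix (Fin m) (Fin m) ℂ →ₗ[ℂ] (Matrix A0 A0 ℂ →ₗ[ℂ] Matrix A1 A1 ℂ),
      (choi (choiMapOf Θ)).PosSemidef ∧
      (∀ ρ : Matrix (Fin m) (Fin m) ℂ, ρ.PosSemidef → ρ.trace = 1 → IsTP (Θ ρ)) ∧
      (∀ ρ : Matrix (Fin m) (Fin m) ℂ, ρ.PosSemidef → ρ.trace = 1 → deph ρ = ρ →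
        IsChannel (Θ ρ) ∧ IsClassical (Θ ρ)) ∧
      Θ (maxCoh m) = N := by
  have hm0 : (m : ℂ) ≠ 0 := Nat.cast_ne_zero.mpr (by omega)
  have hm1 : (m : ℂ) - 1 ≠ 0 := by
    have : (m : ℂ) ≠ 1 := by exact_mod_cast (by omega : m ≠ 1)
    intro h; apply this; linear_combination h
  refine ⟨thetaMap N E₀, ?_, ?_, ?_, ?_⟩
  · -- CP of the supermap
    have hY : ((m:ℂ) • choi E₀ - choi N).PosSemidef := by
      have : (m:ℂ) • choi E₀ - choi N = (m : ℝ) • choi E₀ - choi N := by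
        ext p q
        simp [Complex.real_smul]
      rw [this]; exact hrob
    have key : choi (choiMapOf (thetaMap (m := m) N E₀)) =
        (maxCoh m) ⊗ₖ (choi N) +
        (((m:ℂ) - 1)⁻¹ • (1 - maxCoh m)) ⊗ₖ ((m:ℂ) • choi E₀ - choi N) := by
      ext ⟨i, k, l⟩ ⟨j, k', l'⟩
      simp only [choi, choiMapOf, thetaMap, LinearMap.coe_mk, AddHom.coe_mk,
        Matrix.of_apply, Matrix.add_apply, Matrix.kroneckerMap_apply,
        LinearMap.add_apply, LinearMap.smul_apply, LinearMap.sub_apply,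
        Matrix.smul_apply, Matrix.sub_apply, trace_mul_stdBasisMatrix',
        smul_eq_mul, Matrix.one_apply, maxCoh]
      by_cases hij : i = j <;> simp [hij, eq_comm]
    rw [key]
    exact (psd_kron (maxCoh_psd hm) hN.1).add (psd_kron (q_psd hm) hY)
  · -- TP
    intro ρ _ htr X
    have ht : ((1 - maxCoh m) * ρ).trace = 1 - (maxCoh m * ρ).trace := by
      rw [sub_mul, one_mul, Matrix.trace_sub, htr]
    simp only [thetaMap, LinearMap.coe_mk, AddHom.coe_mk, LinearMap.add_apply,
      LinearMap.smul_apply, LinearMap.sub_apply, Matrix.trace_add, Matrix.trace_smul,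
      Matrix.trace_sub, hN.2 X, hE₀.2 X, smul_eq_mul, ht]
    field_simp
    ring
  · -- diagonal density matrices give a classical channel
    intro ρ _ htr hdiag
    have hoff : ∀ i j : Fin m, i ≠ j → ρ i j = 0 := by
      intro i j h
      conv_lhs => rw [← hdiag]
      simp [deph, h]
    have ha : (maxCoh m * ρ).trace = 1 / (m:ℂ) := by
      have e1 : (maxCoh m * ρ).trace = (1/(m:ℂ)) * ∑ i, ∑ k, ρ k i := by
        simp only [Matrix.trace, Matrix.diag, Matrix.mul_apply, maxCoh, Matrix.of_apply,
          Finset.mul_sum]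
      have h2 : ∀ i : Fin m, ∑ k, ρ k i = ρ i i := fun i =>
        Finset.sum_eq_single i (fun k _ hk => hoff k i hk) (by simp)
      rw [e1]
      simp_rw [h2]
      rw [show ∑ i, ρ i i = ρ.trace from rfl, htr, mul_one]
    have ht : ((1 - maxCoh m) * ρ).trace = 1 - 1/(m:ℂ) := by
      rw [sub_mul, one_mul, Matrix.trace_sub, htr, ha]
    have heq : thetaMap (m := m) N E₀ ρ = E₀ := by
      simp only [thetaMap, LinearMap.coe_mk, AddHom.coe_mk, ha, ht]
      have hb : ((m:ℂ) - 1)⁻¹ * (1 - 1/(m:ℂ)) = 1/(m:ℂ) := by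
        field_simp
      rw [hb, smul_sub, smul_smul]
      have : (1/(m:ℂ)) * (m:ℂ) = 1 := by field_simp
      rw [this, one_smul]
      abel
    rw [heq]
    exact ⟨hE₀, hE₀c⟩
  · -- recovers N on the maximally coherent state
    have ha : (maxCoh m * maxCoh m).trace = 1 := by
      rw [maxCoh_mul_self hm, maxCoh_trace hm]
    have ht : ((1 - maxCoh m) * maxCoh m).trace = 0 := by
      rw [sub_mul, one_mul, maxCoh_mul_self hm, Matrix.trace_sub, sub_self]
    simp [thetaMap, ha, ht]

end
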